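/- arXiv:0908.2641 — 2 statements merged into one kernel-verified Lean document; each statement's English description precedes it below -/
import Mathlib

section
/- Under the bijection psi from noncrossing partitions of type B_n to pairs (sigma, x): if pi has no zero block then sigma has the same type as pi (i.e., for each i, the number of blocks of sigma of size i equals the number of pairs (B,-B) of blocks of pi of size i), and if pi has a zero block of size 2i then the type of sigma is obtained from the type of pi by adding one block of size i. -/
open Finset

/-- The ground set `{±1, …, ±n} ⊆ ℤ`. -/
noncomputable abbrev gsB (n : ℕ) : Finset ℤ := (Finset.Icc (-(n : ℤ)) (n : ℤ)).erase 0

/-- The negative `-B` of a set of integers. -/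
def negSet (B : Finset ℤ) : Finset ℤ := B.image (fun x => -x)

/-- `a` and `b` lie in a common block of the partition `P`. -/
def SameBlock {α : Type*} [DecidableEq α] {s : Finset α} (P : Finpartition s) (a b : α) : Prop :=
  ∃ B ∈ P.parts, a ∈ B ∧ b ∈ B

/-- Refinement order on partitions. -/
def Refines {α : Type*} [DecidableEq α] {s : Finset α} (P Q : Finpartition s) : Prop :=
  ∀ B ∈ P.parts, ∃ C ∈ Q.parts, B ⊆ C

/-- A partition of `{±1,…,±n}` is of type `Bₙ`: blocks come in pairs `B, -B` and there is at
most one block with `B = -B` (the zero block). -/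
def IsBPartition {n : ℕ} (P : Finpartition (gsB n)) : Prop :=
  (∀ B ∈ P.parts, negSet B ∈ P.parts) ∧
  (∀ B ∈ P.parts, ∀ C ∈ P.parts, negSet B = B → negSet C = C → B = C)

/-- The position of `x ∈ {±1,…,±n}` in the circular order `1, 2, …, n, -1, -2, …, -n`. -/
def posB (n : ℕ) (x : ℤ) : ℕ := if 0 < x then x.toNat - 1 else n + (-x).toNat - 1

/-- A type `Bₙ` partition is noncrossing: no two blocks cross in the circular representation,
i.e. there are no positions `p a < p b < p c < p d` (in the circular order
`1,…,n,-1,…,-n`) with `a, c` in one block and `b, d` in a different one. -/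
def IsNoncrossingB {n : ℕ} (P : Finpartition (gsB n)) : Prop :=
  ∀ a b c d : ℤ, posB n a < posB n b → posB n b < posB n c → posB n c < posB n d →
    SameBlock P a c → SameBlock P b d → SameBlock P a b

/-- The partition has a zero block. -/
def HasZeroBlock {n : ℕ} (P : Finpartition (gsB n)) : Prop :=
  ∃ B ∈ P.parts, negSet B = B

/-- The number of unordered pairs `(B, -B)` of nonzero blocks of `P`. -/
def nzB {n : ℕ} (P : Finpartition (gsB n)) : ℕ :=
  (P.parts.filter fun B => negSet B ≠ B).card / 2

/-- The number of unordered pairs `(B, -B)` of nonzero blocks of `P` of size `i`. -/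
def btype {n : ℕ} (P : Finpartition (gsB n)) (i : ℕ) : ℕ :=
  (P.parts.filter fun B => negSet B ≠ B ∧ B.card = i).card / 2

/-- Every block of `P` has size divisible by `k`. -/
def IsKDivisible {α : Type*} [DecidableEq α] {s : Finset α} (k : ℕ) (P : Finpartition s) : Prop :=
  ∀ B ∈ P.parts, k ∣ B.card

/-- The parts of the noncrossing partition `σ` of `[n]` obtained from a type `Bₙ` partition
`π` by identifying `i` and `-i` (taking absolute values of all elements). -/
def quotParts {n : ℕ} (P : Finpartition (gsB n)) : Finset (Finset ℕ) :=
  P.parts.image (fun B => B.image Int.natAbs)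

/-!
Taking absolute values sends a block `B` of `π` to a block `|B|` of `σ`. Blocks of a partition
with the same absolute values are equal or negatives of each other, so `|·|` identifies exactly
the pairs `B, -B`. A nonzero block is disjoint from its negative, so `|B|` has the size of `B`;
the zero block `Z = -Z` avoids `0`, so `|·|` is two-to-one on it and `|Z|` has half its size.
-/

theorem Finset.card_eq_mul_card_image_of_card_fiber {α β : Type*} [DecidableEq β] {f : α → β}
    (s : Finset α) (k : ℕ) (hk : ∀ b ∈ s.image f, #{a ∈ s | f a = b} = k) :
    #s = k * #(s.image f) :=
  le_antisymm (card_le_mul_card_image s k fun b hb => (hk b hb).le)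
    (mul_card_image_le_card s k fun b hb => (hk b hb).ge)

lemma mem_negSet {B : Finset ℤ} {a : ℤ} : a ∈ negSet B ↔ -a ∈ B := by
  simp [negSet, neg_eq_iff_eq_neg]

lemma negSet_negSet (B : Finset ℤ) : negSet (negSet B) = B := by
  ext a; simp [mem_negSet]

lemma negSet_mono {B C : Finset ℤ} (h : B ⊆ C) : negSet B ⊆ negSet C :=
  image_subset_image h

lemma image_natAbs_negSet (B : Finset ℤ) :
    (negSet B).image Int.natAbs = B.image Int.natAbs := by
  ext a; simp [negSet]

lemma card_image_natAbs_of_disjoint_negSet {B : Finset ℤ} (h : Disjoint B (negSet B)) :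
    #(B.image Int.natAbs) = #B := by
  refine card_image_of_injOn fun a ha b hb hab => ?_
  rcases Int.natAbs_eq_natAbs_iff.mp hab with rfl | rfl
  · rfl
  · exact absurd (mem_negSet.mpr ha) (disjoint_left.mp h hb)

lemma card_eq_two_mul_card_image_natAbs {Z : Finset ℤ} (h0 : 0 ∉ Z) (hZ : negSet Z = Z) :
    #Z = 2 * #(Z.image Int.natAbs) := by
  refine card_eq_mul_card_image_of_card_fiber Z 2 fun b hb => ?_
  obtain ⟨a, ha, rfl⟩ := mem_image.mp hb
  have hfiber : {x ∈ Z | x.natAbs = a.natAbs} = {a, -a} := by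
    ext x
    simp only [mem_filter, mem_insert, mem_singleton, Int.natAbs_eq_natAbs_iff]
    constructor
    · exact And.right
    · rintro (rfl | rfl)
      · exact ⟨ha, .inl rfl⟩
      · exact ⟨by rw [← hZ, mem_negSet, neg_neg]; exact ha, .inr rfl⟩
  rw [hfiber, card_pair]
  intro h
  obtain rfl : a = 0 := by omega
  exact h0 ha

lemma subset_negSet_of_image_natAbs_eq {s : Finset ℤ} (P : Finpartition s) {B C : Finset ℤ}
    (hB : B ∈ P.parts) (hC : C ∈ P.parts) (hBC : B ≠ C)
    (h : B.image Int.natAbs = C.image Int.natAbs) : C ⊆ negSet B := by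
  intro c hc
  obtain ⟨b, hb, hbc⟩ := mem_image.mp (h ▸ mem_image_of_mem Int.natAbs hc)
  rcases Int.natAbs_eq_natAbs_iff.mp hbc with rfl | rfl
  · exact absurd (P.eq_of_mem_parts hB hC hb hc) hBC
  · exact mem_negSet.mpr hb

lemma eq_or_eq_negSet_of_image_natAbs_eq {s : Finset ℤ} (P : Finpartition s) {B C : Finset ℤ}
    (hB : B ∈ P.parts) (hC : C ∈ P.parts) (h : B.image Int.natAbs = C.image Int.natAbs) :
    C = B ∨ C = negSet B := by
  by_cases hBC : B = C
  · exact .inl hBC.symm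
  refine .inr (subset_antisymm (subset_negSet_of_image_natAbs_eq P hB hC hBC h) ?_)
  have hCB := subset_negSet_of_image_natAbs_eq P hC hB (Ne.symm hBC) h.symm
  simpa only [negSet_negSet] using negSet_mono hCB

section TypeB

variable {n : ℕ} {π : Finpartition (gsB n)}

lemma zero_notMem_of_mem_parts {B : Finset ℤ} (hB : B ∈ π.parts) : 0 ∉ B := fun h =>
  (mem_erase.mp (π.le hB h)).1 rfl

lemma IsBPartition.disjoint_negSet (hπ : IsBPartition π) {B : Finset ℤ} (hB : B ∈ π.parts)
    (hne : negSet B ≠ B) : Disjoint B (negSet B) :=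
  π.disjoint hB (hπ.1 B hB) (Ne.symm hne)

lemma IsBPartition.btype_eq_card_image (hπ : IsBPartition π) (i : ℕ) :
    btype π i = #({B ∈ π.parts | negSet B ≠ B ∧ #B = i}.image (·.image Int.natAbs)) := by
  set S := {B ∈ π.parts | negSet B ≠ B ∧ #B = i}
  have hnegS : ∀ B ∈ S, negSet B ∈ S := by
    intro B hBS
    obtain ⟨hB, hne, hcard⟩ := mem_filter.mp hBS
    have hcard' : #(negSet B) = i := hcard ▸ card_image_of_injective _ neg_injective
    refine mem_filter.mpr ⟨hπ.1 B hB, ?_, hcard'⟩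
    rw [negSet_negSet]; exact Ne.symm hne
  have hS : #S = 2 * #(S.image (·.image Int.natAbs)) := by
    refine card_eq_mul_card_image_of_card_fiber S 2 fun A hA => ?_
    obtain ⟨B, hBS, rfl⟩ := mem_image.mp hA
    have hfiber : {C ∈ S | C.image Int.natAbs = B.image Int.natAbs} = {B, negSet B} := by
      ext C
      simp only [mem_filter, mem_insert, mem_singleton]
      constructor
      · rintro ⟨hCS, h⟩
        exact eq_or_eq_negSet_of_image_natAbs_eq π (mem_filter.mp hBS).1 (mem_filter.mp hCS).1
          h.symm
      · rintro (rfl | rfl)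
        · exact ⟨hBS, rfl⟩
        · exact ⟨hnegS B hBS, image_natAbs_negSet B⟩
    rw [hfiber, card_pair (Ne.symm (mem_filter.mp hBS).2.1)]
  change #S / 2 = _
  rw [hS, Nat.mul_div_cancel_left _ two_pos]

lemma IsBPartition.filter_quotParts_card_eq (hπ : IsBPartition π) (i : ℕ) :
    {A ∈ quotParts π | #A = i} =
      {B ∈ π.parts | negSet B ≠ B ∧ #B = i}.image (·.image Int.natAbs) ∪
        {B ∈ π.parts | negSet B = B ∧ #B = 2 * i}.image (·.image Int.natAbs) := by
  ext A
  simp only [quotParts, mem_filter, mem_union, mem_image]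
  constructor
  · rintro ⟨⟨B, hB, rfl⟩, rfl⟩
    by_cases hzero : negSet B = B
    · exact .inr ⟨B, ⟨hB, hzero,
        card_eq_two_mul_card_image_natAbs (zero_notMem_of_mem_parts hB) hzero⟩, rfl⟩
    · exact .inl ⟨B, ⟨hB, hzero,
        (card_image_natAbs_of_disjoint_negSet (hπ.disjoint_negSet hB hzero)).symm⟩, rfl⟩
  · rintro (⟨B, ⟨hB, hne, rfl⟩, rfl⟩ | ⟨B, ⟨hB, hzero, hcard⟩, rfl⟩)
    · exact ⟨⟨B, hB, rfl⟩,
        card_image_natAbs_of_disjoint_negSet (hπ.disjoint_negSet hB hne)⟩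
    · refine ⟨⟨B, hB, rfl⟩, ?_⟩
      have := card_eq_two_mul_card_image_natAbs (zero_notMem_of_mem_parts hB) hzero
      omega

lemma IsBPartition.card_filter_quotParts (hπ : IsBPartition π) (i : ℕ) :
    #{A ∈ quotParts π | #A = i} =
      btype π i + #{B ∈ π.parts | negSet B = B ∧ #B = 2 * i} := by
  set f : Finset ℤ → Finset ℕ := (·.image Int.natAbs)
  set S := {B ∈ π.parts | negSet B ≠ B ∧ #B = i}
  set Z := {B ∈ π.parts | negSet B = B ∧ #B = 2 * i}
  have hdisj : Disjoint (S.image f) (Z.image f) := by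
    refine disjoint_left.mpr fun A hAS hAZ => ?_
    obtain ⟨B, hBS, rfl⟩ := mem_image.mp hAS
    obtain ⟨C, hCZ, hCB⟩ := mem_image.mp hAZ
    obtain ⟨hB, hne, -⟩ := mem_filter.mp hBS
    obtain ⟨hC, hzero, -⟩ := mem_filter.mp hCZ
    rcases eq_or_eq_negSet_of_image_natAbs_eq π hC hB hCB with rfl | rfl
    · exact hne hzero
    · rw [hzero] at hne; exact hne hzero
  have hinj : Set.InjOn f Z := by
    intro B hBZ C hCZ h
    obtain ⟨hB, hzero, -⟩ := mem_filter.mp hBZ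
    rcases eq_or_eq_negSet_of_image_natAbs_eq π hB (mem_filter.mp hCZ).1 h with rfl | rfl
    · rfl
    · exact hzero.symm
  rw [hπ.filter_quotParts_card_eq, card_union_of_disjoint hdisj, card_image_of_injOn hinj,
    hπ.btype_eq_card_image]

end TypeB

theorem stmt5_general (n : ℕ) (π : Finpartition (gsB n))
    (hB : IsBPartition π) :
    (¬ HasZeroBlock π →
      ∀ i, ((quotParts π).filter fun A => A.card = i).card = btype π i) ∧
    (∀ Z ∈ π.parts, negSet Z = Z →
      ∀ i, ((quotParts π).filter fun A => A.card = i).card =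
        btype π i + (if Z.card = 2 * i then 1 else 0)) := by
  refine ⟨fun hnz i => ?_, fun Z hZ hz i => ?_⟩
  · rw [hB.card_filter_quotParts, filter_eq_empty_iff.mpr fun B hB' h => hnz ⟨B, hB', h.1⟩,
      card_empty, add_zero]
  · have hzero : {B ∈ π.parts | negSet B = B} = {Z} :=
      eq_singleton_iff_unique_mem.mpr ⟨mem_filter.mpr ⟨hZ, hz⟩,
        fun B hB' => hB.2 B (mem_filter.mp hB').1 Z hZ (mem_filter.mp hB').2 hz⟩
    rw [hB.card_filter_quotParts, ← filter_filter, hzero, filter_singleton]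
    split_ifs <;> rfl

/-- **Theorem (type behaviour of the bijection ψ).** If `π ∈ NC_B(n)` and `σ` is the
noncrossing partition of `[n]` obtained from `π` by identifying `i` and `-i`, then:
if `π` has no zero block, `σ` has the same type as `π` (for each `i`, the number of blocks of
`σ` of size `i` equals the number of pairs `(B, -B)` of blocks of `π` of size `i`), and if `π`
has a zero block of size `2i₀` the type of `σ` is obtained from that of `π` by adding one
block of size `i₀`. -/
theorem stmt5 (n : ℕ) (π : Finpartition (gsB n))
    (hB : IsBPartition π) (hnc : IsNoncrossingB π) :
    (¬ HasZeroBlock π →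
      ∀ i, ((quotParts π).filter fun A => A.card = i).card = btype π i) ∧
    (∀ Z ∈ π.parts, negSet Z = Z →
      ∀ i, ((quotParts π).filter fun A => A.card = i).card =
        btype π i + (if Z.card = 2 * i then 1 else 0)) :=
  stmt5_general n π hB
end

section
/- There is a bijection tau between the set of pairs (L,R) of subsets of [n] with |L|=|R| whose cyclic parenthesization leaves at least one integer unenclosed, and the set of pairs (B, pi) where pi is a noncrossing partition of [n] and B is a block of pi. Moreover, if tau(L,R) = (B,pi) where pi has type (b; b_1,...,b_n) and |B| = j, then the type of (L,R) is (b-1; b_1,...,b_j - 1,...,b_n). -/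
open Finset
open scoped Classical

/-- The ground set `[n] = {1, …, n}`. -/
abbrev gsA (n : ℕ) : Finset ℕ := Finset.Icc 1 n

/-- A partition of `[n]` is noncrossing. -/
def IsNoncrossing {n : ℕ} (P : Finpartition (gsA n)) : Prop :=
  ∀ a b c d : ℕ, a < b → b < c → c < d →
    SameBlock P a c → SameBlock P b d → SameBlock P a b

/-! Positions of the tokens of the cyclic parenthesization of a pair `(L, R)` of subsets of
`[n]`: the left parenthesis of `i` sits at `3i`, the integer `i` at `3i+1`, and the right
parenthesis of `i` at `3i+2`, all read cyclically modulo `M = 3(n+1)`. -/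

/-- Position of `x` relative to `a` on the cycle `ℤ/M`. -/
def relM (M a x : ℕ) : ℤ := ((x : ℤ) - (a : ℤ)) % (M : ℤ)

/-- The position `x` lies (weakly) in the cyclic interval from `a` to `b`. -/
def InArc (M a b x : ℕ) : Prop := relM M a x ≤ relM M a b

/-- The cyclic arc `[la, ra]` is strictly nested inside the arc `[lb, rb]`. -/
def NestedIn (M la ra lb rb : ℕ) : Prop :=
  0 < relM M lb la ∧ relM M lb la ≤ relM M lb ra ∧ relM M lb ra ≤ relM M lb rb

/-- The cyclic arcs `[la, ra]` and `[lb, rb]` are disjoint. -/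
def SepArc (M la ra lb rb : ℕ) : Prop :=
  relM M lb rb < relM M lb la ∧ relM M lb la ≤ relM M lb ra

/-- `f` is the parenthesis matching of the cyclic parenthesization of `(L, R)`: it matches
each right parenthesis `r ∈ R` with a left parenthesis `f r ∈ L`, bijectively, and the
resulting arcs (from left to matching right parenthesis, clockwise) are pairwise nested or
disjoint. -/
def IsMatching (n : ℕ) (L R : Finset ℕ) (f : ℕ → ℕ) : Prop :=
  (∀ r ∈ R, f r ∈ L) ∧ (∀ r ∈ R, ∀ r' ∈ R, f r = f r' → r = r') ∧
  (∀ x ∈ L, ∃ r ∈ R, f r = x) ∧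
  (∀ r ∈ R, ∀ r' ∈ R, r ≠ r' →
    NestedIn (3 * (n + 1)) (3 * f r) (3 * r + 2) (3 * f r') (3 * r' + 2) ∨
    NestedIn (3 * (n + 1)) (3 * f r') (3 * r' + 2) (3 * f r) (3 * r + 2) ∨
    SepArc (3 * (n + 1)) (3 * f r) (3 * r + 2) (3 * f r') (3 * r' + 2))

/-- The integers enclosed by the pair of parentheses of `r ∈ R` and by no other matching
pair nested inside it; its cardinality is the *size* of `r`. -/
noncomputable def enclosed (n : ℕ) (R : Finset ℕ) (f : ℕ → ℕ) (r : ℕ) : Finset ℕ :=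
  (gsA n).filter (fun x =>
    InArc (3 * (n + 1)) (3 * f r) (3 * r + 2) (3 * x + 1) ∧
    ∀ r' ∈ R, r' ≠ r →
      NestedIn (3 * (n + 1)) (3 * f r') (3 * r' + 2) (3 * f r) (3 * r + 2) →
      ¬ InArc (3 * (n + 1)) (3 * f r') (3 * r' + 2) (3 * x + 1))

/-- The integers enclosed by no matching pair of parentheses. -/
noncomputable def unenclosed (n : ℕ) (R : Finset ℕ) (f : ℕ → ℕ) : Finset ℕ :=
  (gsA n).filter (fun x =>
    ∀ r ∈ R, ¬ InArc (3 * (n + 1)) (3 * f r) (3 * r + 2) (3 * x + 1))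

/-- The relation `τ(L,R) = (B, π)`: the blocks of `π` are the enclosed sets of the matching
pairs of parentheses of `(L, R)` together with the set `B` of unenclosed integers. -/
def TauRel (n : ℕ) (L R B : Finset ℕ) (π : Finpartition (gsA n)) : Prop :=
  L ⊆ gsA n ∧ R ⊆ gsA n ∧ L.card = R.card ∧
  ∃ f : ℕ → ℕ, IsMatching n L R f ∧ B = unenclosed n R f ∧
    π.parts = insert B (R.image (enclosed n R f))

/-!
Cut the cycle just before the tokens of an unenclosed integer `b`. Every arc of a matching becomes
an interval of `[n]` read cyclically from `b`, and these intervals are pairwise nested or disjoint.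
The enclosed sets and the unenclosed set therefore partition `[n]` without crossings in this
order, and being noncrossing does not depend on where the cycle is cut. Conversely, a noncrossing
partition with a block `B ∋ b` is recovered by matching, in each other block, the first element
with the last one.

For uniqueness, the depth of an integer (the number of arcs around it) changes between two
integers by an amount that depends on `L` and `R` only, so all matchings that leave something
unenclosed leave the same integers unenclosed. Two matchings with a common cut agree, by induction
on the right endpoint. The type identity just counts blocks: distinct right parentheses enclose
distinct nonempty blocks, all different from `B`.
-/

section CyclicPositions

variable {M : ℕ}

lemma relM_nonneg (hM : 0 < M) (a x : ℕ) : 0 ≤ relM M a x :=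
  Int.emod_nonneg _ (by exact_mod_cast hM.ne')

lemma relM_lt (hM : 0 < M) (a x : ℕ) : relM M a x < M :=
  Int.emod_lt_of_pos _ (by exact_mod_cast hM)

lemma relM_add_relM (hM : 0 < M) (a b c : ℕ) :
    relM M a b + relM M b c = relM M a c ∨ relM M a b + relM M b c = relM M a c + M := by
  have hmod : relM M a c = (relM M a b + relM M b c) % M := by
    rw [relM, relM, relM, ← Int.add_emod, sub_add_sub_cancel']
  have := relM_nonneg hM a b; have := relM_lt hM a b
  have := relM_nonneg hM b c; have := relM_lt hM b c
  rcases lt_or_ge (relM M a b + relM M b c) M with h | h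
  · left; rw [hmod, Int.emod_eq_of_lt (by omega) h]
  · right
    have hshift : relM M a b + relM M b c = (relM M a b + relM M b c - M) + M * 1 := by ring
    rw [hmod, hshift, Int.add_mul_emod_self_left, Int.emod_eq_of_lt (by omega) (by omega)]
    ring

lemma inArc_iff_relM_add (hM : 0 < M) {a c x : ℕ} :
    InArc M a c x ↔ relM M a x + relM M x c = relM M a c := by
  have := relM_add_relM hM a x c
  have := relM_nonneg hM x c; have := relM_lt hM x c
  unfold InArc; omega

lemma relM_add_of_not_inArc (hM : 0 < M) {a c x : ℕ} (h : ¬ InArc M a c x) :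
    relM M a x + relM M x c = relM M a c + M := by
  have := relM_add_relM hM a x c
  have := relM_nonneg hM x c
  unfold InArc at h; omega

end CyclicPositions

def rotPos (n b x : ℕ) : ℤ := ((x : ℤ) - b) % (n + 1)

lemma rotPos_bounds (n b x : ℕ) : 0 ≤ rotPos n b x ∧ rotPos n b x ≤ n := by
  have : rotPos n b x < n + 1 := Int.emod_lt_of_pos _ (by positivity)
  exact ⟨Int.emod_nonneg _ (by positivity), by omega⟩

section RotatedOrder

variable {n b : ℕ}

lemma rotPos_self : rotPos n b b = 0 := by simp [rotPos]

lemma rotPos_eq {x : ℕ} (hx : x ∈ gsA n) (hb : b ∈ gsA n) :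
    (b ≤ x ∧ rotPos n b x = (x : ℤ) - b) ∨ (x < b ∧ rotPos n b x = (x : ℤ) - b + (n + 1)) := by
  simp only [gsA, mem_Icc] at hx hb
  rcases le_or_gt b x with h | h
  · exact Or.inl ⟨h, Int.emod_eq_of_lt (by omega) (by omega)⟩
  · refine Or.inr ⟨h, ?_⟩
    rw [rotPos, ← Int.add_emod_right, Int.emod_eq_of_lt (by omega) (by omega)]

lemma rotPos_injOn (hb : b ∈ gsA n) : Set.InjOn (rotPos n b) (gsA n) := by
  intro x hx y hy h
  rw [mem_coe] at hx hy
  have := rotPos_eq hx hb; have := rotPos_eq hy hb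
  simp only [gsA, mem_Icc] at hx hy
  omega

lemma rotPos_pos (hb : b ∈ gsA n) {x : ℕ} (hx : x ∈ gsA n) (hxb : x ≠ b) :
    0 < rotPos n b x :=
  lt_of_le_of_ne (rotPos_bounds n b x).1
    fun h => hxb (rotPos_injOn hb hx hb (h.symm.trans rotPos_self.symm))

/-- Token `k` of the integer `x` (`k = 0, 1, 2` for the left parenthesis, the integer and the right
parenthesis) sits at `3 * rotPos n b x + k` when the cycle is cut just before the tokens of `b`. -/
lemma relM_token (x : ℕ) {k : ℕ} (hk : k < 3) :
    relM (3 * (n + 1)) (3 * b) (3 * x + k) = 3 * rotPos n b x + k := by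
  have := rotPos_bounds n b x
  have hsplit : ((3 * x + k : ℕ) : ℤ) - (3 * b : ℕ) =
      (3 * rotPos n b x + k) + ((3 * (n + 1) : ℕ) : ℤ) * (((x : ℤ) - b) / (n + 1)) := by
    have := Int.emod_add_mul_ediv ((x : ℤ) - b) (n + 1)
    rw [rotPos]; push_cast; linear_combination (-3) * this
  rw [relM, hsplit, Int.add_mul_emod_self_left]
  exact Int.emod_eq_of_lt (by omega) (by push_cast; omega)

end RotatedOrder

noncomputable def rotFirst (n b : ℕ) (A : Finset ℕ) : ℕ :=
  if h : A.Nonempty then (A.exists_min_image (rotPos n b) h).choose else 0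

noncomputable def rotLast (n b : ℕ) (A : Finset ℕ) : ℕ :=
  if h : A.Nonempty then (A.exists_max_image (rotPos n b) h).choose else 0

section RotFirstLast

variable {n b : ℕ} {A : Finset ℕ}

lemma rotFirst_mem (n b : ℕ) (h : A.Nonempty) : rotFirst n b A ∈ A := by
  rw [rotFirst, dif_pos h]; exact (A.exists_min_image (rotPos n b) h).choose_spec.1

lemma rotPos_rotFirst_le {x : ℕ} (hx : x ∈ A) : rotPos n b (rotFirst n b A) ≤ rotPos n b x := by
  rw [rotFirst, dif_pos ⟨x, hx⟩]; exact (A.exists_min_image (rotPos n b) ⟨x, hx⟩).choose_spec.2 x hx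

lemma rotLast_mem (n b : ℕ) (h : A.Nonempty) : rotLast n b A ∈ A := by
  rw [rotLast, dif_pos h]; exact (A.exists_max_image (rotPos n b) h).choose_spec.1

lemma rotPos_le_rotLast {x : ℕ} (hx : x ∈ A) : rotPos n b x ≤ rotPos n b (rotLast n b A) := by
  rw [rotLast, dif_pos ⟨x, hx⟩]; exact (A.exists_max_image (rotPos n b) ⟨x, hx⟩).choose_spec.2 x hx

lemma rotFirst_eq (hb : b ∈ gsA n) (hA : A ⊆ gsA n) {x : ℕ} (hx : x ∈ A)
    (h : ∀ y ∈ A, rotPos n b x ≤ rotPos n b y) : rotFirst n b A = x :=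
  rotPos_injOn hb (hA (rotFirst_mem n b ⟨x, hx⟩)) (hA hx)
    (le_antisymm (rotPos_rotFirst_le hx) (h _ (rotFirst_mem n b ⟨x, hx⟩)))

lemma rotLast_eq (hb : b ∈ gsA n) (hA : A ⊆ gsA n) {x : ℕ} (hx : x ∈ A)
    (h : ∀ y ∈ A, rotPos n b y ≤ rotPos n b x) : rotLast n b A = x :=
  rotPos_injOn hb (hA (rotLast_mem n b ⟨x, hx⟩)) (hA hx)
    (le_antisymm (h _ (rotLast_mem n b ⟨x, hx⟩)) (rotPos_le_rotLast hx))

end RotFirstLast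

section TokenArcs

variable {n b : ℕ}

lemma relM_tokens (n b a j x k : ℕ) (hj : j < 3) (hk : k < 3) :
    (3 * rotPos n b a + j ≤ 3 * rotPos n b x + k ∧
      relM (3 * (n + 1)) (3 * a + j) (3 * x + k) = 3 * rotPos n b x + k - (3 * rotPos n b a + j)) ∨
    (3 * rotPos n b x + k < 3 * rotPos n b a + j ∧
      relM (3 * (n + 1)) (3 * a + j) (3 * x + k) =
        3 * rotPos n b x + k - (3 * rotPos n b a + j) + 3 * (n + 1)) := by
  have hM : 0 < 3 * (n + 1) := by positivity
  have hsum := relM_add_relM hM (3 * b) (3 * a + j) (3 * x + k)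
  rw [relM_token a hj, relM_token x hk] at hsum
  have := relM_nonneg hM (3 * a + j) (3 * x + k); have := relM_lt hM (3 * a + j) (3 * x + k)
  have := rotPos_bounds n b a
  have := rotPos_bounds n b x
  push_cast at *
  omega

lemma not_inArc_token_iff (l r : ℕ) :
    ¬ InArc (3 * (n + 1)) (3 * l) (3 * r + 2) (3 * b + 1) ↔
      0 < rotPos n b l ∧ rotPos n b l ≤ rotPos n b r := by
  have h1 := relM_tokens n b l 0 b 1 (by norm_num) (by norm_num)
  have h2 := relM_tokens n b l 0 r 2 (by norm_num) (by norm_num)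
  have := rotPos_bounds n b l
  have := rotPos_bounds n b r
  simp only [add_zero, rotPos_self, Nat.cast_zero, Nat.cast_one, Nat.cast_ofNat] at h1 h2
  unfold InArc; omega

lemma inArc_token_iff {l r : ℕ} (hlr : rotPos n b l ≤ rotPos n b r) (x : ℕ) :
    InArc (3 * (n + 1)) (3 * l) (3 * r + 2) (3 * x + 1) ↔
      rotPos n b l ≤ rotPos n b x ∧ rotPos n b x ≤ rotPos n b r := by
  have h1 := relM_tokens n b l 0 x 1 (by norm_num) (by norm_num)
  have h2 := relM_tokens n b l 0 r 2 (by norm_num) (by norm_num)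
  have := rotPos_bounds n b l
  have := rotPos_bounds n b r
  have := rotPos_bounds n b x
  simp only [add_zero, Nat.cast_zero, Nat.cast_one, Nat.cast_ofNat] at h1 h2
  unfold InArc; omega

lemma nestedIn_token_iff {l r l' r' : ℕ} (hlr : rotPos n b l ≤ rotPos n b r)
    (hlr' : rotPos n b l' ≤ rotPos n b r') :
    NestedIn (3 * (n + 1)) (3 * l) (3 * r + 2) (3 * l') (3 * r' + 2) ↔
      rotPos n b l' < rotPos n b l ∧ rotPos n b r ≤ rotPos n b r' := by
  have h1 := relM_tokens n b l' 0 l 0 (by norm_num) (by norm_num)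
  have h2 := relM_tokens n b l' 0 r 2 (by norm_num) (by norm_num)
  have h3 := relM_tokens n b l' 0 r' 2 (by norm_num) (by norm_num)
  have := rotPos_bounds n b l
  have := rotPos_bounds n b r
  have := rotPos_bounds n b l'
  have := rotPos_bounds n b r'
  simp only [add_zero, Nat.cast_zero, Nat.cast_ofNat] at h1 h2 h3
  unfold NestedIn; omega

lemma sepArc_token_iff {l r l' r' : ℕ} (hlr : rotPos n b l ≤ rotPos n b r)
    (hlr' : rotPos n b l' ≤ rotPos n b r') :
    SepArc (3 * (n + 1)) (3 * l) (3 * r + 2) (3 * l') (3 * r' + 2) ↔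
      rotPos n b r' < rotPos n b l ∨ rotPos n b r < rotPos n b l' := by
  have h1 := relM_tokens n b l' 0 l 0 (by norm_num) (by norm_num)
  have h2 := relM_tokens n b l' 0 r 2 (by norm_num) (by norm_num)
  have h3 := relM_tokens n b l' 0 r' 2 (by norm_num) (by norm_num)
  have := rotPos_bounds n b l
  have := rotPos_bounds n b r
  have := rotPos_bounds n b l'
  have := rotPos_bounds n b r'
  simp only [add_zero, Nat.cast_zero, Nat.cast_ofNat] at h1 h2 h3
  unfold SepArc; omega

end TokenArcs

section Linearization

variable {n b : ℕ} {L R : Finset ℕ} {f : ℕ → ℕ}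

lemma rotPos_matched_le (hb : b ∈ unenclosed n R f) {r : ℕ} (hr : r ∈ R) :
    0 < rotPos n b (f r) ∧ rotPos n b (f r) ≤ rotPos n b r :=
  (not_inArc_token_iff _ _).1 ((mem_filter.1 hb).2 r hr)

lemma inArc_iff_rotPos (hb : b ∈ unenclosed n R f) {r : ℕ} (hr : r ∈ R) (x : ℕ) :
    InArc (3 * (n + 1)) (3 * f r) (3 * r + 2) (3 * x + 1) ↔
      rotPos n b (f r) ≤ rotPos n b x ∧ rotPos n b x ≤ rotPos n b r :=
  inArc_token_iff (rotPos_matched_le hb hr).2 x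

lemma nestedIn_iff_rotPos (hb : b ∈ unenclosed n R f) {r r' : ℕ} (hr : r ∈ R) (hr' : r' ∈ R) :
    NestedIn (3 * (n + 1)) (3 * f r) (3 * r + 2) (3 * f r') (3 * r' + 2) ↔
      rotPos n b (f r') < rotPos n b (f r) ∧ rotPos n b r ≤ rotPos n b r' :=
  nestedIn_token_iff (rotPos_matched_le hb hr).2 (rotPos_matched_le hb hr').2

lemma mem_unenclosed_iff_rotPos (hb : b ∈ unenclosed n R f) {x : ℕ} :
    x ∈ unenclosed n R f ↔ x ∈ gsA n ∧
      ∀ r ∈ R, ¬ (rotPos n b (f r) ≤ rotPos n b x ∧ rotPos n b x ≤ rotPos n b r) := by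
  simp only [unenclosed, mem_filter]
  exact and_congr_right fun _ => forall₂_congr fun r hr => by rw [inArc_iff_rotPos hb hr]

lemma mem_enclosed_iff_rotPos (hb : b ∈ unenclosed n R f) {r : ℕ} (hr : r ∈ R) {x : ℕ} :
    x ∈ enclosed n R f r ↔ x ∈ gsA n ∧
      (rotPos n b (f r) ≤ rotPos n b x ∧ rotPos n b x ≤ rotPos n b r) ∧
      ∀ r' ∈ R, r' ≠ r → rotPos n b (f r) < rotPos n b (f r') → rotPos n b r' ≤ rotPos n b r →
        ¬ (rotPos n b (f r') ≤ rotPos n b x ∧ rotPos n b x ≤ rotPos n b r') := by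
  simp only [enclosed, mem_filter, inArc_iff_rotPos hb hr]
  refine and_congr_right fun _ => and_congr_right fun _ => forall₂_congr fun r' hr' => ?_
  rw [nestedIn_iff_rotPos hb hr' hr, inArc_iff_rotPos hb hr', and_imp]

lemma rotPos_intervals_trichotomy (hm : IsMatching n L R f) (hb : b ∈ unenclosed n R f)
    {r r' : ℕ} (hr : r ∈ R) (hr' : r' ∈ R) (hne : r ≠ r') :
    (rotPos n b (f r') < rotPos n b (f r) ∧ rotPos n b r ≤ rotPos n b r') ∨
    (rotPos n b (f r) < rotPos n b (f r') ∧ rotPos n b r' ≤ rotPos n b r) ∨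
    rotPos n b r' < rotPos n b (f r) ∨ rotPos n b r < rotPos n b (f r') := by
  rcases hm.2.2.2 r hr r' hr' hne with h | h | h
  · exact Or.inl ((nestedIn_iff_rotPos hb hr hr').1 h)
  · exact Or.inr (Or.inl ((nestedIn_iff_rotPos hb hr' hr).1 h))
  · exact Or.inr (Or.inr
      ((sepArc_token_iff (rotPos_matched_le hb hr).2 (rotPos_matched_le hb hr').2).1 h))

end Linearization

def RotCrossing (n b : ℕ) (X Y : Finset ℕ) : Prop :=
  ∃ x₁ ∈ X, ∃ y₁ ∈ Y, ∃ x₂ ∈ X, ∃ y₂ ∈ Y,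
    rotPos n b x₁ < rotPos n b y₁ ∧ rotPos n b y₁ < rotPos n b x₂ ∧ rotPos n b x₂ < rotPos n b y₂

section Noncrossing

variable {n b : ℕ}

lemma rotPos_cyclic_of_lt {a₁ a₂ a₃ a₄ : ℕ} (hb : b ∈ gsA n) (h₁ : a₁ ∈ gsA n) (h₂ : a₂ ∈ gsA n)
    (h₃ : a₃ ∈ gsA n) (h₄ : a₄ ∈ gsA n) (o₁ : a₁ < a₂) (o₂ : a₂ < a₃) (o₃ : a₃ < a₄) :
    (rotPos n b a₁ < rotPos n b a₂ ∧ rotPos n b a₂ < rotPos n b a₃ ∧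
        rotPos n b a₃ < rotPos n b a₄) ∨
      (rotPos n b a₂ < rotPos n b a₃ ∧ rotPos n b a₃ < rotPos n b a₄ ∧
        rotPos n b a₄ < rotPos n b a₁) ∨
      (rotPos n b a₃ < rotPos n b a₄ ∧ rotPos n b a₄ < rotPos n b a₁ ∧
        rotPos n b a₁ < rotPos n b a₂) ∨
      (rotPos n b a₄ < rotPos n b a₁ ∧ rotPos n b a₁ < rotPos n b a₂ ∧
        rotPos n b a₂ < rotPos n b a₃) := by
  have := rotPos_eq h₁ hb; have := rotPos_eq h₂ hb
  have := rotPos_eq h₃ hb; have := rotPos_eq h₄ hb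
  simp only [gsA, mem_Icc] at h₁ h₂ h₃ h₄ hb
  omega

lemma cyclic_lt_of_rotPos_lt {a₁ a₂ a₃ a₄ : ℕ} (hb : b ∈ gsA n) (h₁ : a₁ ∈ gsA n)
    (h₂ : a₂ ∈ gsA n) (h₃ : a₃ ∈ gsA n) (h₄ : a₄ ∈ gsA n) (o₁ : rotPos n b a₁ < rotPos n b a₂)
    (o₂ : rotPos n b a₂ < rotPos n b a₃) (o₃ : rotPos n b a₃ < rotPos n b a₄) :
    (a₁ < a₂ ∧ a₂ < a₃ ∧ a₃ < a₄) ∨ (a₂ < a₃ ∧ a₃ < a₄ ∧ a₄ < a₁) ∨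
    (a₃ < a₄ ∧ a₄ < a₁ ∧ a₁ < a₂) ∨ (a₄ < a₁ ∧ a₁ < a₂ ∧ a₂ < a₃) := by
  have := rotPos_eq h₁ hb; have := rotPos_eq h₂ hb
  have := rotPos_eq h₃ hb; have := rotPos_eq h₄ hb
  simp only [gsA, mem_Icc] at h₁ h₂ h₃ h₄ hb
  omega

lemma isNoncrossing_iff_not_rotCrossing {π : Finpartition (gsA n)} (hb : b ∈ gsA n) :
    IsNoncrossing π ↔ ∀ X ∈ π.parts, ∀ Y ∈ π.parts, X ≠ Y → ¬ RotCrossing n b X Y := by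
  constructor
  · rintro hnc X hX Y hY hne ⟨x₁, hx₁, y₁, hy₁, x₂, hx₂, y₂, hy₂, o₁, o₂, o₃⟩
    have hXY : ∀ u ∈ X, ∀ v ∈ Y, ¬ SameBlock π u v ∧ ¬ SameBlock π v u := by
      refine fun u hu v hv => ⟨fun ⟨Z, hZ, huZ, hvZ⟩ => hne ?_, fun ⟨Z, hZ, hvZ, huZ⟩ => hne ?_⟩ <;>
        exact (π.eq_of_mem_parts hZ hX huZ hu).symm.trans (π.eq_of_mem_parts hZ hY hvZ hv)
    rcases cyclic_lt_of_rotPos_lt hb (π.le hX hx₁) (π.le hY hy₁) (π.le hX hx₂) (π.le hY hy₂)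
      o₁ o₂ o₃ with ⟨p₁, p₂, p₃⟩ | ⟨p₁, p₂, p₃⟩ | ⟨p₁, p₂, p₃⟩ | ⟨p₁, p₂, p₃⟩
    · exact (hXY x₁ hx₁ y₁ hy₁).1 (hnc _ _ _ _ p₁ p₂ p₃ ⟨X, hX, hx₁, hx₂⟩ ⟨Y, hY, hy₁, hy₂⟩)
    · exact (hXY x₂ hx₂ y₁ hy₁).2 (hnc _ _ _ _ p₁ p₂ p₃ ⟨Y, hY, hy₁, hy₂⟩ ⟨X, hX, hx₂, hx₁⟩)
    · exact (hXY x₂ hx₂ y₂ hy₂).1 (hnc _ _ _ _ p₁ p₂ p₃ ⟨X, hX, hx₂, hx₁⟩ ⟨Y, hY, hy₂, hy₁⟩)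
    · exact (hXY x₁ hx₁ y₂ hy₂).2 (hnc _ _ _ _ p₁ p₂ p₃ ⟨Y, hY, hy₂, hy₁⟩ ⟨X, hX, hx₁, hx₂⟩)
  · rintro h a c d e hac hcd hde ⟨X, hX, haX, hdX⟩ ⟨Y, hY, hcY, heY⟩
    by_cases hne : X = Y
    · exact ⟨X, hX, haX, hne ▸ hcY⟩
    exfalso
    rcases rotPos_cyclic_of_lt hb (π.le hX haX) (π.le hY hcY) (π.le hX hdX) (π.le hY heY)
      hac hcd hde with ⟨o₁, o₂, o₃⟩ | ⟨o₁, o₂, o₃⟩ | ⟨o₁, o₂, o₃⟩ | ⟨o₁, o₂, o₃⟩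
    · exact h X hX Y hY hne ⟨a, haX, c, hcY, d, hdX, e, heY, o₁, o₂, o₃⟩
    · exact h Y hY X hX (Ne.symm hne) ⟨c, hcY, d, hdX, e, heY, a, haX, o₁, o₂, o₃⟩
    · exact h X hX Y hY hne ⟨d, hdX, e, heY, a, haX, c, hcY, o₁, o₂, o₃⟩
    · exact h Y hY X hX (Ne.symm hne) ⟨e, heY, a, haX, c, hcY, d, hdX, o₁, o₂, o₃⟩

end Noncrossing

noncomputable def tauBlocks (n : ℕ) (R : Finset ℕ) (f : ℕ → ℕ) : Finset (Finset ℕ) :=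
  insert (unenclosed n R f) (R.image (enclosed n R f))

lemma mem_tauBlocks {n : ℕ} {R : Finset ℕ} {f : ℕ → ℕ} {X : Finset ℕ} :
    X ∈ tauBlocks n R f ↔ X = unenclosed n R f ∨ ∃ r ∈ R, enclosed n R f r = X := by
  rw [tauBlocks, mem_insert, mem_image]

lemma unenclosed_subset {n : ℕ} {R : Finset ℕ} {f : ℕ → ℕ} : unenclosed n R f ⊆ gsA n :=
  filter_subset _ _

lemma enclosed_subset {n : ℕ} {R : Finset ℕ} {f : ℕ → ℕ} (r : ℕ) : enclosed n R f r ⊆ gsA n :=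
  filter_subset _ _

section ForwardMap

variable {n b : ℕ} {L R : Finset ℕ} {f : ℕ → ℕ}
  (hL : L ⊆ gsA n) (hR : R ⊆ gsA n) (hm : IsMatching n L R f) (hb : b ∈ unenclosed n R f)
include hb

include hL hm in
lemma matched_mem_enclosed {r : ℕ} (hr : r ∈ R) : f r ∈ enclosed n R f r := by
  have := rotPos_matched_le hb hr
  refine (mem_enclosed_iff_rotPos hb hr).2 ⟨hL (hm.1 r hr), ⟨le_rfl, this.2⟩, ?_⟩
  intro r' _ _ h _ h'
  exact absurd h'.1 (not_le.2 h)

include hR in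
lemma mem_enclosed_self {r : ℕ} (hr : r ∈ R) : r ∈ enclosed n R f r := by
  refine (mem_enclosed_iff_rotPos hb hr).2 ⟨hR hr, ⟨(rotPos_matched_le hb hr).2, le_rfl⟩, ?_⟩
  intro r' hr' hne _ h h'
  exact hne (rotPos_injOn (unenclosed_subset hb) (hR hr') (hR hr) (le_antisymm h h'.2))

include hm in
lemma disjoint_enclosed {r r' : ℕ} (hr : r ∈ R) (hr' : r' ∈ R) (hne : r ≠ r') :
    Disjoint (enclosed n R f r) (enclosed n R f r') := by
  refine disjoint_left.2 fun x hx hx' => ?_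
  obtain ⟨-, ⟨h1, h2⟩, hin⟩ := (mem_enclosed_iff_rotPos hb hr).1 hx
  obtain ⟨-, ⟨h1', h2'⟩, hin'⟩ := (mem_enclosed_iff_rotPos hb hr').1 hx'
  rcases rotPos_intervals_trichotomy hm hb hr hr' hne with ⟨t1, t2⟩ | ⟨t1, t2⟩ | t | t
  · exact hin' r hr hne t1 t2 ⟨h1, h2⟩
  · exact hin r' hr' hne.symm t1 t2 ⟨h1', h2'⟩
  · omega
  · omega

lemma disjoint_unenclosed_enclosed {r : ℕ} (hr : r ∈ R) :
    Disjoint (unenclosed n R f) (enclosed n R f r) :=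
  disjoint_left.2 fun _ hx hx' =>
    ((mem_unenclosed_iff_rotPos hb).1 hx).2 r hr ((mem_enclosed_iff_rotPos hb hr).1 hx').2.1

/-- An integer covered by some interval is enclosed by the shortest one covering it. -/
lemma mem_unenclosed_or_enclosed {x : ℕ} (hx : x ∈ gsA n) :
    x ∈ unenclosed n R f ∨ ∃ r ∈ R, x ∈ enclosed n R f r := by
  set covering := R.filter fun r => rotPos n b (f r) ≤ rotPos n b x ∧ rotPos n b x ≤ rotPos n b r
  rcases covering.eq_empty_or_nonempty with h | h
  · left
    refine (mem_unenclosed_iff_rotPos hb).2 ⟨hx, fun r hr hcov => ?_⟩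
    exact (filter_eq_empty_iff.1 h) hr hcov
  · right
    obtain ⟨r, hr, hmin⟩ := covering.exists_min_image (fun r => rotPos n b r - rotPos n b (f r)) h
    obtain ⟨hrR, hcov⟩ := mem_filter.1 hr
    refine ⟨r, hrR, (mem_enclosed_iff_rotPos hb hrR).2 ⟨hx, hcov, ?_⟩⟩
    intro r' hr' _ h1 h2 hcov'
    have := hmin r' (mem_filter.2 ⟨hr', hcov'⟩)
    omega

include hm in
lemma pairwiseDisjoint_tauBlocks : (tauBlocks n R f : Set (Finset ℕ)).PairwiseDisjoint id := by
  intro X hX Y hY hne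
  rcases mem_tauBlocks.1 hX with rfl | ⟨r, hr, rfl⟩ <;>
    rcases mem_tauBlocks.1 hY with rfl | ⟨r', hr', rfl⟩
  · exact absurd rfl hne
  · exact disjoint_unenclosed_enclosed hb hr'
  · exact (disjoint_unenclosed_enclosed hb hr).symm
  · exact disjoint_enclosed hm hb hr hr' fun h => hne (h ▸ rfl)

lemma sup_tauBlocks : (tauBlocks n R f).sup id = gsA n := by
  refine le_antisymm (Finset.sup_le fun X hX => ?_) fun x hx => mem_sup.2 ?_
  · rcases mem_tauBlocks.1 hX with rfl | ⟨r, -, rfl⟩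
    exacts [unenclosed_subset, enclosed_subset r]
  · rcases mem_unenclosed_or_enclosed hb hx with h | ⟨r, hr, h⟩
    · exact ⟨_, mem_insert_self _ _, h⟩
    · exact ⟨_, mem_insert_of_mem (mem_image_of_mem _ hr), h⟩

include hL hm in
lemma empty_not_mem_tauBlocks : ∅ ∉ tauBlocks n R f := by
  intro h
  rcases mem_tauBlocks.1 h with h | ⟨r, hr, h⟩
  · exact notMem_empty b (h ▸ hb)
  · exact notMem_empty (f r) (h ▸ matched_mem_enclosed hL hm hb hr)

noncomputable def tauPartition : Finpartition (gsA n) where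
  parts := tauBlocks n R f
  supIndep := supIndep_iff_pairwiseDisjoint.2 (pairwiseDisjoint_tauBlocks hm hb)
  sup_parts := sup_tauBlocks hb
  bot_notMem := empty_not_mem_tauBlocks hL hm hb

include hm in
lemma not_rotCrossing_tauBlocks {X Y : Finset ℕ} (hX : X ∈ tauBlocks n R f)
    (hY : Y ∈ tauBlocks n R f) (hne : X ≠ Y) : ¬ RotCrossing n b X Y := by
  rintro ⟨x₁, hx₁, y₁, hy₁, x₂, hx₂, y₂, hy₂, o₁, o₂, o₃⟩
  rcases mem_tauBlocks.1 hX with rfl | ⟨r, hr, rfl⟩ <;>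
    rcases mem_tauBlocks.1 hY with rfl | ⟨r', hr', rfl⟩
  · exact hne rfl
  · have h₁ := ((mem_enclosed_iff_rotPos hb hr').1 hy₁).2.1
    have h₂ := ((mem_enclosed_iff_rotPos hb hr').1 hy₂).2.1
    exact ((mem_unenclosed_iff_rotPos hb).1 hx₂).2 r' hr' ⟨by omega, by omega⟩
  · have h₁ := ((mem_enclosed_iff_rotPos hb hr).1 hx₁).2.1
    have h₂ := ((mem_enclosed_iff_rotPos hb hr).1 hx₂).2.1
    exact ((mem_unenclosed_iff_rotPos hb).1 hy₁).2 r hr ⟨by omega, by omega⟩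
  · have hrr : r ≠ r' := fun h => hne (h ▸ rfl)
    obtain ⟨-, ⟨a₁, -⟩, -⟩ := (mem_enclosed_iff_rotPos hb hr).1 hx₁
    obtain ⟨-, ⟨a₂, a₃⟩, hin⟩ := (mem_enclosed_iff_rotPos hb hr).1 hx₂
    obtain ⟨-, ⟨b₁, b₂⟩, hin'⟩ := (mem_enclosed_iff_rotPos hb hr').1 hy₁
    obtain ⟨-, ⟨-, b₃⟩, -⟩ := (mem_enclosed_iff_rotPos hb hr').1 hy₂
    rcases rotPos_intervals_trichotomy hm hb hr hr' hrr with ⟨t₁, t₂⟩ | ⟨t₁, t₂⟩ | t | t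
    · exact hin' r hr hrr t₁ t₂ ⟨by omega, by omega⟩
    · exact hin r' hr' hrr.symm t₁ t₂ ⟨by omega, by omega⟩
    · omega
    · omega

include hL hm in
lemma tauPartition_isNoncrossing : IsNoncrossing (tauPartition hL hm hb) :=
  (isNoncrossing_iff_not_rotCrossing (unenclosed_subset hb)).2 fun _ hX _ hY hne =>
    not_rotCrossing_tauBlocks hm hb hX hY hne

include hL hm in
lemma enclosed_injOn : Set.InjOn (enclosed n R f) R := by
  intro r hr r' hr' h
  by_contra hne
  have hfr := matched_mem_enclosed hL hm hb hr
  exact disjoint_left.1 (disjoint_enclosed hm hb hr hr' hne) hfr (h ▸ hfr)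

include hL hm in
lemma unenclosed_not_mem_image_enclosed : unenclosed n R f ∉ R.image (enclosed n R f) := by
  intro h
  obtain ⟨r, hr, h⟩ := mem_image.1 h
  have hfr := matched_mem_enclosed hL hm hb hr
  exact disjoint_left.1 (disjoint_unenclosed_enclosed hb hr) (h ▸ hfr) hfr

include hL hm in
lemma card_filter_enclosed_add_ite (i : ℕ) :
    (R.filter fun r => (enclosed n R f r).card = i).card +
        (if (unenclosed n R f).card = i then 1 else 0) =
      ((tauBlocks n R f).filter fun A => A.card = i).card := by
  have himage : ((R.image (enclosed n R f)).filter fun A => A.card = i).card =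
      (R.filter fun r => (enclosed n R f r).card = i).card := by
    rw [filter_image, card_image_of_injOn ((enclosed_injOn hL hm hb).mono (filter_subset _ _))]
  rw [tauBlocks, filter_insert]
  split_ifs
  · rw [card_insert_of_notMem fun h => unenclosed_not_mem_image_enclosed hL hm hb
      (mem_of_mem_filter _ h), himage]
  · rw [himage, add_zero]

include hL hm in
lemma rotFirst_enclosed {r : ℕ} (hr : r ∈ R) : rotFirst n b (enclosed n R f r) = f r :=
  rotFirst_eq (unenclosed_subset hb) (enclosed_subset r) (matched_mem_enclosed hL hm hb hr)
    fun _ hy => ((mem_enclosed_iff_rotPos hb hr).1 hy).2.1.1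

include hR in
lemma rotLast_enclosed {r : ℕ} (hr : r ∈ R) : rotLast n b (enclosed n R f r) = r :=
  rotLast_eq (unenclosed_subset hb) (enclosed_subset r) (mem_enclosed_self hR hb hr)
    fun _ hy => ((mem_enclosed_iff_rotPos hb hr).1 hy).2.1.2

end ForwardMap

noncomputable def depth (n : ℕ) (R : Finset ℕ) (f : ℕ → ℕ) (x : ℕ) : ℕ :=
  (R.filter fun r => InArc (3 * (n + 1)) (3 * f r) (3 * r + 2) (3 * x + 1)).card

section Depth

variable {n : ℕ} {L R : Finset ℕ} {f f' : ℕ → ℕ}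

lemma image_eq_of_isMatching (hm : IsMatching n L R f) : R.image f = L := by
  ext l
  simp only [mem_image]
  exact ⟨fun ⟨r, hr, h⟩ => h ▸ hm.1 r hr, fun hl => hm.2.2.1 l hl⟩

lemma mem_unenclosed_iff_depth {x : ℕ} :
    x ∈ unenclosed n R f ↔ x ∈ gsA n ∧ depth n R f x = 0 := by
  rw [unenclosed, depth, mem_filter, card_eq_zero, filter_eq_empty_iff]

/-- Each arc contributes `M` or `0` according as it contains `x`, by `relM_add_relM`. -/
lemma mul_depth (x : ℕ) :
    ((3 * (n + 1) : ℕ) : ℤ) * depth n R f x =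
      ∑ r ∈ R, (((3 * (n + 1) : ℕ) : ℤ) + relM (3 * (n + 1)) (3 * f r) (3 * r + 2) -
        relM (3 * (n + 1)) (3 * f r) (3 * x + 1) -
        relM (3 * (n + 1)) (3 * x + 1) (3 * r + 2)) := by
  have hM : 0 < 3 * (n + 1) := by positivity
  rw [depth, card_filter, Nat.cast_sum, mul_sum]
  refine sum_congr rfl fun r _ => ?_
  split_ifs with h
  · rw [Nat.cast_one, mul_one]; linarith [(inArc_iff_relM_add hM).1 h]
  · rw [Nat.cast_zero, mul_zero]; linarith [relM_add_of_not_inArc hM h]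

lemma mul_depth_sub_depth (hm : IsMatching n L R f) (x y : ℕ) :
    ((3 * (n + 1) : ℕ) : ℤ) * ((depth n R f x : ℤ) - depth n R f y) =
      ∑ l ∈ L, (relM (3 * (n + 1)) (3 * l) (3 * y + 1) - relM (3 * (n + 1)) (3 * l) (3 * x + 1)) +
      ∑ r ∈ R, (relM (3 * (n + 1)) (3 * y + 1) (3 * r + 2) -
        relM (3 * (n + 1)) (3 * x + 1) (3 * r + 2)) := by
  rw [mul_sub, mul_depth, mul_depth, ← image_eq_of_isMatching hm,
    sum_image fun r hr r' hr' h => hm.2.1 r hr r' hr' h, ← sum_sub_distrib, ← sum_add_distrib]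
  exact sum_congr rfl fun r _ => by ring

lemma depth_sub_depth_eq (hm : IsMatching n L R f) (hm' : IsMatching n L R f') (x y : ℕ) :
    (depth n R f x : ℤ) - depth n R f y = (depth n R f' x : ℤ) - depth n R f' y :=
  mul_left_cancel₀ (by positivity)
    ((mul_depth_sub_depth hm x y).trans (mul_depth_sub_depth hm' x y).symm)

/-- Depths under `f` and under `f'` differ by a constant, and both attain their minimum `0`. -/
lemma unenclosed_eq_of_isMatching (hm : IsMatching n L R f) (hm' : IsMatching n L R f')
    {u u' : ℕ} (hu : u ∈ unenclosed n R f) (hu' : u' ∈ unenclosed n R f') :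
    unenclosed n R f = unenclosed n R f' := by
  have hdu := (mem_unenclosed_iff_depth.1 hu).2
  have hdu' := (mem_unenclosed_iff_depth.1 hu').2
  have hd'u : depth n R f' u = 0 := by
    have := depth_sub_depth_eq hm hm' u' u
    omega
  ext x
  have := depth_sub_depth_eq hm hm' x u
  rw [mem_unenclosed_iff_depth, mem_unenclosed_iff_depth]
  exact and_congr_right fun _ => by omega

end Depth

section MatchingUnique

variable {n b : ℕ} {L R : Finset ℕ} {f f' : ℕ → ℕ}
  (hL : L ⊆ gsA n) (hR : R ⊆ gsA n) (hm : IsMatching n L R f) (hm' : IsMatching n L R f')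
  (hb : b ∈ unenclosed n R f) (hb' : b ∈ unenclosed n R f')
include hR hm hm' hb hb'

/-- If `f' r` came strictly before `f r`, the arc of `f'` opening at `f r` would close before `r`,
at an `s` where `f` and `f'` already agree, forcing `f s = f r`. -/
lemma rotPos_matched_le_of_forall_lt {r : ℕ} (hr : r ∈ R)
    (hbelow : ∀ s ∈ R, rotPos n b s < rotPos n b r → f s = f' s) :
    rotPos n b (f r) ≤ rotPos n b (f' r) := by
  by_contra hlt
  obtain ⟨s, hs, hfs⟩ := hm'.2.2.1 (f r) (hm.1 r hr)
  have hsr : s ≠ r := by rintro rfl; exact hlt (hfs ▸ le_rfl)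
  have h₁ := rotPos_matched_le hb hr
  have h₂ := rotPos_matched_le hb' hs
  have htri := rotPos_intervals_trichotomy hm' hb' hr hs hsr.symm
  rw [hfs] at h₂ htri
  rcases htri with ⟨t₁, t₂⟩ | ⟨t₁, t₂⟩ | t | t
  · omega
  · have hlt' : rotPos n b s < rotPos n b r := lt_of_le_of_ne t₂
      fun h => hsr (rotPos_injOn (unenclosed_subset hb) (hR hs) (hR hr) h)
    exact hsr (hm.2.1 s hs r hr ((hbelow s hs hlt').trans hfs))
  · omega
  · omega

include hL in
lemma eqOn_of_isMatching : Set.EqOn f f' R := by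
  by_contra hbad
  obtain ⟨r₀, hr₀, hne₀⟩ : ∃ r ∈ R, f r ≠ f' r := by simpa [Set.EqOn] using hbad
  obtain ⟨r, hr, hmin⟩ := (R.filter fun r => f r ≠ f' r).exists_min_image (rotPos n b)
    ⟨r₀, mem_filter.2 ⟨hr₀, hne₀⟩⟩
  obtain ⟨hrR, hne⟩ := mem_filter.1 hr
  have hbelow : ∀ s ∈ R, rotPos n b s < rotPos n b r → f s = f' s := fun s hs hlt => by
    by_contra h
    exact absurd (hmin s (mem_filter.2 ⟨hs, h⟩)) (not_le.2 hlt)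
  have hle := rotPos_matched_le_of_forall_lt hR hm hm' hb hb' hrR hbelow
  have hge := rotPos_matched_le_of_forall_lt hR hm' hm hb' hb hrR
    fun s hs hlt => (hbelow s hs hlt).symm
  exact hne (rotPos_injOn (unenclosed_subset hb) (hL (hm.1 r hrR)) (hL (hm'.1 r hrR))
    (le_antisymm hle hge))

end MatchingUnique

section TauWellDefined

variable {n : ℕ} {L R : Finset ℕ} {f f' : ℕ → ℕ}

lemma enclosed_congr (h : Set.EqOn f f' R) {r : ℕ} (hr : r ∈ R) :
    enclosed n R f r = enclosed n R f' r := by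
  refine filter_congr fun x _ => ?_
  rw [h hr]
  exact and_congr_right fun _ => forall₂_congr fun r' hr' => by rw [h hr']

lemma tauBlocks_congr (h : Set.EqOn f f' R) : tauBlocks n R f = tauBlocks n R f' := by
  have hU : unenclosed n R f = unenclosed n R f' :=
    filter_congr fun x _ => forall₂_congr fun r hr => by rw [h hr]
  rw [tauBlocks, tauBlocks, hU, image_congr fun r hr => enclosed_congr h hr]

lemma existsUnique_tauRel (hL : L ⊆ gsA n) (hR : R ⊆ gsA n) (hcard : L.card = R.card)
    (hex : ∃ f, IsMatching n L R f ∧ (unenclosed n R f).Nonempty) :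
    ∃! Bπ : Finset ℕ × {π : Finpartition (gsA n) // IsNoncrossing π},
      TauRel n L R Bπ.1 Bπ.2.1 := by
  obtain ⟨f, hm, b, hb⟩ := hex
  refine ⟨⟨unenclosed n R f, tauPartition hL hm hb, tauPartition_isNoncrossing hL hm hb⟩,
    ⟨hL, hR, hcard, f, hm, rfl, rfl⟩, ?_⟩
  rintro ⟨B', π', _⟩ ⟨-, -, -, f', hm', rfl, hπ'⟩
  obtain ⟨u, hu⟩ := π'.nonempty_of_mem_parts (hπ' ▸ mem_insert_self _ _)
  have hU := unenclosed_eq_of_isMatching hm' hm hu hb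
  have hf := eqOn_of_isMatching hL hR hm' hm (hU ▸ hb) hb
  exact Prod.ext hU (Subtype.ext (Finpartition.ext (hπ'.trans (tauBlocks_congr hf))))

end TauWellDefined


section NoncrossingIntervals

variable {n b : ℕ} {π : Finpartition (gsA n)} (hb : b ∈ gsA n) {X Y : Finset ℕ}
  (hX : X ∈ π.parts) (hY : Y ∈ π.parts) (hne : X ≠ Y)
include hb hX hY hne

lemma rotPos_ne_of_mem_parts {x y : ℕ} (hx : x ∈ X) (hy : y ∈ Y) : rotPos n b x ≠ rotPos n b y :=
  fun h => hne (π.eq_of_mem_parts hX hY hx (rotPos_injOn hb (π.le hX hx) (π.le hY hy) h ▸ hy))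

lemma rotPos_nested_of_mem (hnc : IsNoncrossing π) {y : ℕ} (hy : y ∈ Y)
    (h₁ : rotPos n b (rotFirst n b X) < rotPos n b y)
    (h₂ : rotPos n b y < rotPos n b (rotLast n b X)) :
    rotPos n b (rotFirst n b X) < rotPos n b (rotFirst n b Y) ∧
      rotPos n b (rotLast n b Y) < rotPos n b (rotLast n b X) := by
  have hnc' := (isNoncrossing_iff_not_rotCrossing hb).1 hnc
  have hXne := π.nonempty_of_mem_parts hX
  have hYne := π.nonempty_of_mem_parts hY
  have d₁ := rotPos_ne_of_mem_parts hb hX hY hne (rotFirst_mem n b hXne) (rotFirst_mem n b hYne)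
  have d₂ := rotPos_ne_of_mem_parts hb hX hY hne (rotLast_mem n b hXne) (rotLast_mem n b hYne)
  have e₁ := rotPos_rotFirst_le (n := n) (b := b) hy
  have e₂ := rotPos_le_rotLast (n := n) (b := b) hy
  constructor
  · by_contra h
    exact hnc' Y hY X hX hne.symm ⟨_, rotFirst_mem n b hYne, _, rotFirst_mem n b hXne, y, hy, _,
      rotLast_mem n b hXne, by omega, h₁, h₂⟩
  · by_contra h
    exact hnc' X hX Y hY hne ⟨_, rotFirst_mem n b hXne, y, hy, _, rotLast_mem n b hXne, _,
      rotLast_mem n b hYne, h₁, h₂, by omega⟩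

lemma rotPos_blocks_trichotomy (hnc : IsNoncrossing π) :
    (rotPos n b (rotFirst n b Y) < rotPos n b (rotFirst n b X) ∧
        rotPos n b (rotLast n b X) < rotPos n b (rotLast n b Y)) ∨
      (rotPos n b (rotFirst n b X) < rotPos n b (rotFirst n b Y) ∧
        rotPos n b (rotLast n b Y) < rotPos n b (rotLast n b X)) ∨
      rotPos n b (rotLast n b Y) < rotPos n b (rotFirst n b X) ∨
      rotPos n b (rotLast n b X) < rotPos n b (rotFirst n b Y) := by
  have hXne := π.nonempty_of_mem_parts hX
  have hYne := π.nonempty_of_mem_parts hY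
  have d₁ := rotPos_ne_of_mem_parts hb hX hY hne (rotFirst_mem n b hXne) (rotFirst_mem n b hYne)
  have d₂ := rotPos_ne_of_mem_parts hb hX hY hne (rotLast_mem n b hXne) (rotFirst_mem n b hYne)
  have d₃ := rotPos_ne_of_mem_parts hb hX hY hne (rotFirst_mem n b hXne) (rotLast_mem n b hYne)
  have s₁ := rotPos_rotFirst_le (n := n) (b := b) (rotLast_mem n b hXne)
  have s₂ := rotPos_rotFirst_le (n := n) (b := b) (rotLast_mem n b hYne)
  rcases lt_or_gt_of_ne d₁ with h | h
  · rcases lt_or_gt_of_ne d₂ with h' | h'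
    · exact Or.inr (Or.inr (Or.inr h'))
    · exact Or.inr (Or.inl (rotPos_nested_of_mem hb hX hY hne hnc (rotFirst_mem n b hYne) h h'))
  · rcases lt_or_gt_of_ne d₃ with h' | h'
    · exact Or.inl (rotPos_nested_of_mem hb hY hX hne.symm hnc (rotFirst_mem n b hXne) h h')
    · exact Or.inr (Or.inr (Or.inl h'))

end NoncrossingIntervals

/-- `τ⁻¹(B, π)` matches the first element of each block other than `B` with its last element,
in the order of `[n]` read cyclically from `b ∈ B`. -/
noncomputable def tauInvR (n b : ℕ) (π : Finpartition (gsA n)) (B : Finset ℕ) : Finset ℕ :=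
  (π.parts.erase B).image (rotLast n b)

noncomputable def tauInvL (n b : ℕ) (π : Finpartition (gsA n)) (B : Finset ℕ) : Finset ℕ :=
  (π.parts.erase B).image (rotFirst n b)

noncomputable def tauInvMatch (n b : ℕ) (π : Finpartition (gsA n)) (r : ℕ) : ℕ :=
  rotFirst n b (π.part r)

section InverseMap

variable {n b : ℕ} {π : Finpartition (gsA n)} (hnc : IsNoncrossing π) {B : Finset ℕ}
  (hB : B ∈ π.parts) (hbB : b ∈ B)

omit hnc hB in
lemma tauInvMatch_rotLast {A : Finset ℕ} (hA : A ∈ π.parts) :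
    tauInvMatch n b π (rotLast n b A) = rotFirst n b A := by
  rw [tauInvMatch, π.part_eq_of_mem hA (rotLast_mem n b (π.nonempty_of_mem_parts hA))]

include hB hbB

omit hnc in
lemma rotPos_rotFirst_pos {A : Finset ℕ} (hA : A ∈ π.parts.erase B) :
    0 < rotPos n b (rotFirst n b A) := by
  obtain ⟨hAB, hA⟩ := mem_erase.1 hA
  have hfirst := rotFirst_mem n b (π.nonempty_of_mem_parts hA)
  exact rotPos_pos (π.le hB hbB) (π.le hA hfirst)
    fun h => hAB (π.eq_of_mem_parts hA hB hfirst (by rwa [h]))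

omit hnc in
lemma mem_unenclosed_tauInv : b ∈ unenclosed n (tauInvR n b π B) (tauInvMatch n b π) := by
  refine mem_filter.2 ⟨π.le hB hbB, fun r hr => ?_⟩
  obtain ⟨A, hA, rfl⟩ := mem_image.1 hr
  rw [tauInvMatch_rotLast (mem_of_mem_erase hA), not_inArc_token_iff]
  exact ⟨rotPos_rotFirst_pos hB hbB hA,
    rotPos_rotFirst_le (rotLast_mem n b (π.nonempty_of_mem_parts (mem_of_mem_erase hA)))⟩

include hnc

lemma isMatching_tauInv : IsMatching n (tauInvL n b π B) (tauInvR n b π B) (tauInvMatch n b π) := by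
  have hlast : ∀ A ∈ π.parts, rotLast n b A ∈ A :=
    fun A hA => rotLast_mem n b (π.nonempty_of_mem_parts hA)
  refine ⟨fun r hr => ?_, fun r hr r' hr' h => ?_, fun l hl => ?_, fun r hr r' hr' hne => ?_⟩
  · obtain ⟨A, hA, rfl⟩ := mem_image.1 hr
    rw [tauInvMatch_rotLast (mem_of_mem_erase hA)]
    exact mem_image_of_mem _ hA
  · obtain ⟨A, hA, rfl⟩ := mem_image.1 hr
    obtain ⟨A', hA', rfl⟩ := mem_image.1 hr'
    rw [tauInvMatch_rotLast (mem_of_mem_erase hA), tauInvMatch_rotLast (mem_of_mem_erase hA')] at h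
    rw [π.eq_of_mem_parts (mem_of_mem_erase hA) (mem_of_mem_erase hA')
      (rotFirst_mem n b (π.nonempty_of_mem_parts (mem_of_mem_erase hA)))
      (h ▸ rotFirst_mem n b (π.nonempty_of_mem_parts (mem_of_mem_erase hA')))]
  · obtain ⟨A, hA, rfl⟩ := mem_image.1 hl
    exact ⟨_, mem_image_of_mem _ hA, tauInvMatch_rotLast (mem_of_mem_erase hA)⟩
  · obtain ⟨A, hA, rfl⟩ := mem_image.1 hr
    obtain ⟨A', hA', rfl⟩ := mem_image.1 hr'
    have hAA' : A ≠ A' := fun h => hne (h ▸ rfl)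
    replace hA := mem_of_mem_erase hA
    replace hA' := mem_of_mem_erase hA'
    have hle := rotPos_rotFirst_le (n := n) (b := b) (hlast A hA)
    have hle' := rotPos_rotFirst_le (n := n) (b := b) (hlast A' hA')
    rw [tauInvMatch_rotLast hA, tauInvMatch_rotLast hA', nestedIn_token_iff hle hle',
      nestedIn_token_iff hle' hle, sepArc_token_iff hle hle']
    rcases rotPos_blocks_trichotomy (π.le hB hbB) hA hA' hAA' hnc with ⟨t₁, t₂⟩ | ⟨t₁, t₂⟩ | t | t
    · exact Or.inl ⟨t₁, t₂.le⟩
    · exact Or.inr (Or.inl ⟨t₁, t₂.le⟩)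
    · exact Or.inr (Or.inr (Or.inl t))
    · exact Or.inr (Or.inr (Or.inr t))

lemma not_mem_interval_of_mem_erase {A : Finset ℕ} (hA : A ∈ π.parts.erase B) {x : ℕ}
    (hx : x ∈ B) :
    ¬ (rotPos n b (rotFirst n b A) ≤ rotPos n b x ∧ rotPos n b x ≤ rotPos n b (rotLast n b A)) := by
  rintro ⟨h₁, h₂⟩
  obtain ⟨hAB, hA⟩ := mem_erase.1 hA
  have hb := π.le hB hbB
  have hAne := π.nonempty_of_mem_parts hA
  have d₁ := rotPos_ne_of_mem_parts hb hA hB hAB (rotFirst_mem n b hAne) hx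
  have d₂ := rotPos_ne_of_mem_parts hb hA hB hAB (rotLast_mem n b hAne) hx
  have hnest := rotPos_nested_of_mem hb hA hB hAB hnc hx (by omega) (by omega)
  have := rotPos_rotFirst_le (n := n) (b := b) hbB
  rw [rotPos_self] at this
  have := rotPos_bounds n b (rotFirst n b A)
  omega

lemma unenclosed_tauInv : unenclosed n (tauInvR n b π B) (tauInvMatch n b π) = B := by
  ext x
  rw [mem_unenclosed_iff_rotPos (mem_unenclosed_tauInv hB hbB)]
  constructor
  · rintro ⟨hx, hcov⟩
    by_contra hxB
    have hA : π.part x ∈ π.parts.erase B :=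
      mem_erase.2 ⟨fun h => hxB (h ▸ π.mem_part_self.2 hx), π.part_mem.2 hx⟩
    refine hcov _ (mem_image_of_mem _ hA) ?_
    rw [tauInvMatch_rotLast (π.part_mem.2 hx)]
    exact ⟨rotPos_rotFirst_le (π.mem_part_self.2 hx), rotPos_le_rotLast (π.mem_part_self.2 hx)⟩
  · refine fun hx => ⟨π.le hB hx, fun r hr => ?_⟩
    obtain ⟨A, hA, rfl⟩ := mem_image.1 hr
    rw [tauInvMatch_rotLast (mem_of_mem_erase hA)]
    exact not_mem_interval_of_mem_erase hnc hB hbB hA hx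

lemma enclosed_tauInv_subset {A : Finset ℕ} (hA : A ∈ π.parts.erase B) :
    enclosed n (tauInvR n b π B) (tauInvMatch n b π) (rotLast n b A) ⊆ A := by
  have hb := π.le hB hbB
  have hA' := mem_of_mem_erase hA
  have hAne := π.nonempty_of_mem_parts hA'
  intro x hx
  rw [mem_enclosed_iff_rotPos (mem_unenclosed_tauInv hB hbB) (mem_image_of_mem _ hA),
    tauInvMatch_rotLast hA'] at hx
  obtain ⟨hx, ⟨h₁, h₂⟩, hin⟩ := hx
  by_contra hxA
  have hpart := π.part_mem.2 hx
  have hxpart := π.mem_part_self.2 hx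
  have hne : A ≠ π.part x := fun h => hxA (h ▸ hxpart)
  by_cases hxB : x ∈ B
  · exact not_mem_interval_of_mem_erase hnc hB hbB hA hxB ⟨h₁, h₂⟩
  have d₁ := rotPos_ne_of_mem_parts hb hA' hpart hne (rotFirst_mem n b hAne) hxpart
  have d₂ := rotPos_ne_of_mem_parts hb hA' hpart hne (rotLast_mem n b hAne) hxpart
  obtain ⟨t₁, t₂⟩ := rotPos_nested_of_mem hb hA' hpart hne hnc hxpart (by omega) (by omega)
  have hpartB : π.part x ∈ π.parts.erase B := mem_erase.2 ⟨fun h => hxB (h ▸ hxpart), hpart⟩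
  refine hin _ (mem_image_of_mem _ hpartB) (fun h => hne ?_) ?_ t₂.le ?_
  · exact π.eq_of_mem_parts hA' hpart (rotLast_mem n b hAne)
      (h ▸ rotLast_mem n b (π.nonempty_of_mem_parts hpart))
  · rwa [tauInvMatch_rotLast hpart]
  · rw [tauInvMatch_rotLast hpart]
    exact ⟨rotPos_rotFirst_le hxpart, rotPos_le_rotLast hxpart⟩

lemma subset_enclosed_tauInv {A : Finset ℕ} (hA : A ∈ π.parts.erase B) :
    A ⊆ enclosed n (tauInvR n b π B) (tauInvMatch n b π) (rotLast n b A) := by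
  have hb := π.le hB hbB
  have hA' := mem_of_mem_erase hA
  intro x hx
  rw [mem_enclosed_iff_rotPos (mem_unenclosed_tauInv hB hbB) (mem_image_of_mem _ hA),
    tauInvMatch_rotLast hA']
  refine ⟨π.le hA' hx, ⟨rotPos_rotFirst_le hx, rotPos_le_rotLast hx⟩, ?_⟩
  intro r' hr' hne h₁ _ ⟨h₃, h₄⟩
  obtain ⟨A', hA'', rfl⟩ := mem_image.1 hr'
  replace hA'' := mem_of_mem_erase hA''
  have hA'ne := π.nonempty_of_mem_parts hA''
  have hne' : A' ≠ A := fun h => hne (h ▸ rfl)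
  rw [tauInvMatch_rotLast hA''] at h₁ h₃
  have d₁ := rotPos_ne_of_mem_parts hb hA'' hA' hne' (rotFirst_mem n b hA'ne) hx
  have d₂ := rotPos_ne_of_mem_parts hb hA'' hA' hne' (rotLast_mem n b hA'ne) hx
  have := (rotPos_nested_of_mem hb hA'' hA' hne' hnc hx (by omega) (by omega)).1
  exact absurd h₁ (not_lt.2 this.le)

lemma tauBlocks_tauInv : tauBlocks n (tauInvR n b π B) (tauInvMatch n b π) = π.parts := by
  set E := enclosed n (tauInvR n b π B) (tauInvMatch n b π)
  have hE : (tauInvR n b π B).image E = π.parts.erase B :=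
    calc ((π.parts.erase B).image (rotLast n b)).image E
        _ = (π.parts.erase B).image (E ∘ rotLast n b) := image_image
        _ = (π.parts.erase B).image id := image_congr fun A hA =>
          (enclosed_tauInv_subset hnc hB hbB hA).antisymm (subset_enclosed_tauInv hnc hB hbB hA)
        _ = π.parts.erase B := image_id
  rw [tauBlocks, unenclosed_tauInv hnc hB hbB, hE, insert_erase hB]

lemma tauRel_tauInv : TauRel n (tauInvL n b π B) (tauInvR n b π B) B π := by
  have hinj : ∀ g : Finset ℕ → ℕ, (∀ A ∈ π.parts, g A ∈ A) → Set.InjOn g (π.parts.erase B) :=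
    fun g hg A hA A' hA' h => π.eq_of_mem_parts (mem_of_mem_erase hA) (mem_of_mem_erase hA')
      (hg A (mem_of_mem_erase hA)) (h ▸ hg A' (mem_of_mem_erase hA'))
  have hsub : ∀ g : Finset ℕ → ℕ, (∀ A ∈ π.parts, g A ∈ A) →
      (π.parts.erase B).image g ⊆ gsA n := fun g hg => by
    intro x hx
    obtain ⟨A, hA, rfl⟩ := mem_image.1 hx
    exact π.le (mem_of_mem_erase hA) (hg A (mem_of_mem_erase hA))
  have hfirst A (hA : A ∈ π.parts) := rotFirst_mem n b (π.nonempty_of_mem_parts hA)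
  have hlast A (hA : A ∈ π.parts) := rotLast_mem n b (π.nonempty_of_mem_parts hA)
  refine ⟨hsub _ hfirst, hsub _ hlast, ?_, _, isMatching_tauInv hnc hB hbB,
    (unenclosed_tauInv hnc hB hbB).symm, ?_⟩
  · rw [tauInvL, tauInvR, card_image_of_injOn (hinj _ hfirst), card_image_of_injOn (hinj _ hlast)]
  · conv_lhs => rw [← tauBlocks_tauInv hnc hB hbB, tauBlocks, unenclosed_tauInv hnc hB hbB]

omit hnc in
lemma eq_tauInv_of_tauRel {L R : Finset ℕ} (h : TauRel n L R B π) :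
    L = tauInvL n b π B ∧ R = tauInvR n b π B := by
  obtain ⟨hL, hR, -, f, hm, rfl, hπ⟩ := h
  have hrest : π.parts.erase (unenclosed n R f) = R.image (enclosed n R f) := by
    rw [hπ, erase_insert (unenclosed_not_mem_image_enclosed hL hm hbB)]
  rw [tauInvL, tauInvR, hrest, image_image, image_image,
    image_congr (f := rotFirst n b ∘ enclosed n R f) fun r hr => rotFirst_enclosed hL hm hbB hr,
    image_congr (f := rotLast n b ∘ enclosed n R f) (g := id) fun r hr =>
      rotLast_enclosed hR hbB hr,
    image_id, image_eq_of_isMatching hm]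
  exact ⟨rfl, rfl⟩

end InverseMap

lemma existsUnique_tauRel_of_isNoncrossing {n : ℕ} {π : Finpartition (gsA n)}
    (hnc : IsNoncrossing π) {B : Finset ℕ} (hB : B ∈ π.parts) :
    ∃! LR : Finset ℕ × Finset ℕ, TauRel n LR.1 LR.2 B π := by
  obtain ⟨b, hbB⟩ := π.nonempty_of_mem_parts hB
  refine ⟨(tauInvL n b π B, tauInvR n b π B), tauRel_tauInv hnc hB hbB, fun LR h => ?_⟩
  obtain ⟨hL, hR⟩ := eq_tauInv_of_tauRel hB hbB h
  exact Prod.ext hL hR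

/-- **Proposition 4.3.** `τ` is a bijection from the set of pairs `(L, R)` of subsets of
`[n]` with `|L| = |R|` whose cyclic parenthesization leaves some integer unenclosed, onto
the set of pairs `(B, π)` with `π` a noncrossing partition of `[n]` and `B` a block of `π`.
Moreover if `τ(L,R) = (B, π)`, `π` has type `(b; b₁, …, b_n)` and `|B| = j`, then `(L, R)`
has type `(b-1; b₁, …, b_j - 1, …, b_n)`. -/
theorem stmt6 (n : ℕ) :
    (∀ L R : Finset ℕ, L ⊆ gsA n → R ⊆ gsA n → L.card = R.card →
      (∃ f, IsMatching n L R f ∧ (unenclosed n R f).Nonempty) →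
      ∃! Bπ : Finset ℕ × {π : Finpartition (gsA n) // IsNoncrossing π},
        TauRel n L R Bπ.1 Bπ.2.1) ∧
    (∀ π : Finpartition (gsA n), IsNoncrossing π → ∀ B ∈ π.parts,
      ∃! LR : Finset ℕ × Finset ℕ, TauRel n LR.1 LR.2 B π) ∧
    (∀ (L R B : Finset ℕ) (π : Finpartition (gsA n)) (f : ℕ → ℕ),
      L ⊆ gsA n → R ⊆ gsA n → L.card = R.card → IsMatching n L R f →
      B = unenclosed n R f → π.parts = insert B (R.image (enclosed n R f)) →
      ∀ i : ℕ,
        (R.filter (fun r => (enclosed n R f r).card = i)).card +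
          (if B.card = i then 1 else 0) =
        (π.parts.filter (fun A => A.card = i)).card) := by
  refine ⟨fun L R hL hR hcard hex => existsUnique_tauRel hL hR hcard hex,
    fun π hnc B hB => existsUnique_tauRel_of_isNoncrossing hnc hB, ?_⟩
  rintro L R B π f hL - - hm rfl hπ i
  obtain ⟨b, hb⟩ := π.nonempty_of_mem_parts (hπ ▸ mem_insert_self _ _)
  rw [hπ]
  exact card_filter_enclosed_add_ite hL hm hb i
end
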